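/- arXiv:1111.6705 — 3 statements merged into one kernel-verified Lean document; each statement's English description precedes it below -/
import Mathlib

section
/- Every weakly Ramsey ultrafilter on ℕ is a p-point. -/
def IsWeaklyRamseyUF (U : Ultrafilter ℕ) : Prop :=
  ∀ c : ℕ → ℕ → Fin 3, ∃ A ∈ U, ∃ S : Finset (Fin 3), S.card ≤ 2 ∧
    ∀ x ∈ A, ∀ y ∈ A, x < y → c x y ∈ S

/-- `U` is a p-point. -/
def IsPPoint (U : Ultrafilter ℕ) : Prop :=
  ∀ A : ℕ → Set ℕ, (∀ n, A n ∈ U) → (∀ n, A (n + 1) ⊆ A n) →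
    ∃ X ∈ U, ∀ n, (X \ A n).Finite

theorem stmt_5 (U : Ultrafilter ℕ) (h : IsWeaklyRamseyUF U) : IsPPoint U := by
  intro A hA hdec
  by_cases hI : (⋂ n, A n) ∈ U
  · exact ⟨_, hI, fun n => by
      rw [Set.diff_eq_empty.mpr (Set.iInter_subset A n)]; exact Set.finite_empty⟩
  -- complement of the intersection is in U
  have hC : (⋂ n, A n)ᶜ ∈ U := Ultrafilter.compl_mem_iff_notMem.mpr hI
  set C : Set ℕ := (⋂ n, A n)ᶜ with hCdef
  have hant : Antitone A := antitone_nat_of_succ_le hdec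
  -- every member of U is infinite
  have hinf : ∀ T ∈ U, T.Infinite := by
    intro T hT hfin
    obtain ⟨a, _, hpure⟩ := Ultrafilter.eq_pure_of_finite_mem hfin hT
    have haC : a ∈ C := by have := hC; rwa [hpure, Ultrafilter.mem_pure] at this
    have haA : ∀ n, a ∈ A n := fun n => by
      have := hA n; rwa [hpure, Ultrafilter.mem_pure] at this
    exact haC (Set.mem_iInter.mpr haA)
  -- the "first escape" function
  set f : ℕ → ℕ := fun x => sInf {m | x ∉ A m} with hf
  have hfmem : ∀ x ∈ C, x ∉ A (f x) := by
    intro x hx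
    have hne : {m | x ∉ A m}.Nonempty := by
      have hx' := hx
      simp only [hCdef, Set.mem_compl_iff, Set.mem_iInter, not_forall] at hx'
      exact hx'
    exact Nat.sInf_mem hne
  have hfle : ∀ x n, x ∉ A n → f x ≤ n := fun x n hxn => Nat.sInf_le hxn
  have hout : ∀ x ∈ C, ∀ n, f x ≤ n → x ∉ A n := by
    intro x hx n hn hxA
    exact hfmem x hx (hant hn hxA)
  -- the coloring
  set c : ℕ → ℕ → Fin 3 := fun x y =>
    if f x < f y then 0 else if f y < f x then 2 else 1 with hc
  obtain ⟨X, hXU, S, hS2, hcol⟩ := h c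
  obtain ⟨i, hiS⟩ : ∃ i : Fin 3, i ∉ S := by
    by_contra hall
    push_neg at hall
    have : (Finset.univ : Finset (Fin 3)) ⊆ S := fun j _ => hall j
    have := Finset.card_le_card this
    simp at this
    omega
  set X' : Set ℕ := X ∩ C with hX'
  have hX'U : X' ∈ U := Filter.inter_mem hXU hC
  refine ⟨X', hX'U, fun n => ?_⟩
  have hdiff : X' \ A n ⊆ {x ∈ X' | f x ≤ n} := by
    intro x hx
    exact ⟨hx.1, hfle x n hx.2⟩
  fin_cases i
  · -- color 0 missing: f never increases along X; contradiction
    exfalso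
    obtain ⟨x₀, hx₀⟩ := (hinf X' hX'U).nonempty
    have hsub : X' ∩ A (f x₀) ⊆ Set.Iic x₀ := by
      intro x hx
      by_contra hgt
      simp only [Set.mem_Iic, not_le] at hgt
      have hcx := hcol x₀ hx₀.1 x hx.1.1 hgt
      have hne0 : c x₀ x ≠ 0 := by intro h0; rw [h0] at hcx; exact hiS hcx
      have : ¬ f x₀ < f x := by
        intro hlt; apply hne0; simp [hc, hlt]
      push_neg at this
      exact hout x hx.1.2 (f x₀) this hx.2
    exact hinf _ (Filter.inter_mem hX'U (hA (f x₀))) (Set.finite_Iic x₀ |>.subset hsub)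
  · -- color 1 missing: f injective on X'
    have hinj : Set.InjOn f (X' \ A n) := by
      rintro x ⟨⟨hxX, _⟩, _⟩ y ⟨⟨hyX, _⟩, _⟩ hfxy
      by_contra hne
      rcases Nat.lt_or_ge x y with hlt | hge
      · have hcx := hcol x hxX y hyX hlt
        rw [show c x y = 1 by simp [hc, hfxy]] at hcx
        exact hiS hcx
      · have hlt : y < x := lt_of_le_of_ne hge (Ne.symm hne)
        have hcx := hcol y hyX x hxX hlt
        rw [show c y x = 1 by simp [hc, hfxy]] at hcx
        exact hiS hcx
    have himg : f '' (X' \ A n) ⊆ Set.Iic n := by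
      rintro _ ⟨x, hx, rfl⟩
      exact hfle x n hx.2
    exact Set.Finite.of_finite_image ((Set.finite_Iic n).subset himg) hinj
  · -- color 2 missing: f nondecreasing along X'; low-value set is finite
    have hTfin : {x ∈ X' | f x ≤ n}.Finite := by
      by_contra hTinf
      have hTinf : {x ∈ X' | f x ≤ n}.Infinite := hTinf
      -- then every x in X' has f x ≤ n, so X' ∩ A n = ∅
      have hempty : ∀ x ∈ X' ∩ A n, False := by
        rintro x ⟨hxX', hxA⟩
        obtain ⟨y, hy, hxy⟩ := hTinf.exists_gt x
        have hcx := hcol x hxX'.1 y hy.1.1 hxy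
        have hne2 : c x y ≠ 2 := by intro h2; rw [h2] at hcx; exact hiS hcx
        have hle : f x ≤ f y := by
          by_contra hgt
          push_neg at hgt
          apply hne2
          simp [hc, hgt, Nat.lt_asymm hgt]
        exact hout x hxX'.2 n (hle.trans hy.2) hxA
      obtain ⟨x, hx⟩ := (hinf _ (Filter.inter_mem hX'U (hA n))).nonempty
      exact hempty x hx
    exact hTfin.subset hdiff
end

section
/- An ultrafilter U on ℕ is Ramsey if and only if for every decreasing sequence U₀ ⊇ U₁ ⊇ ⋯ of members of U there is X ∈ U such that X ⊆* Uₙ for each n and moreover |X ∩ (Uₙ \ Uₙ₊₁)| ≤ 1 for each n. -/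
def IsRamseyUF (U : Ultrafilter ℕ) : Prop :=
  ∀ c : ℕ → ℕ → Fin 2, ∃ A ∈ U, ∃ k : Fin 2,
    ∀ x ∈ A, ∀ y ∈ A, x < y → c x y = k

open Classical in
private lemma fin2_ne_zero {v : Fin 2} (h : v ≠ 0) : v = 1 := by omega

private lemma exists_ge_mem (U : Ultrafilter ℕ) (hfree : (U : Filter ℕ) ≤ Filter.cofinite)
    {S : Set ℕ} (hS : S ∈ U) (n : ℕ) : ∃ x ∈ S, n ≤ x := by
  have h2 : {x : ℕ | n ≤ x} ∈ U := by
    apply hfree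
    rw [Filter.mem_cofinite]
    have : {x : ℕ | n ≤ x}ᶜ = Set.Iio n := by ext x; simp [Set.mem_Iio]
    rw [this]; exact Set.finite_Iio n
  obtain ⟨x, hx1, hx2⟩ := Ultrafilter.nonempty_of_mem (U.inter_mem hS h2)
  exact ⟨x, hx1, hx2⟩

private lemma finite_notMem (U : Ultrafilter ℕ) (hfree : (U : Filter ℕ) ≤ Filter.cofinite)
    {S : Set ℕ} (hS : S.Finite) : S ∉ U := by
  rw [← Ultrafilter.compl_mem_iff_notMem]
  exact hfree (Filter.mem_cofinite.mpr (by rwa [compl_compl]))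

/-- Ramseyness is equivalent to the selectivity condition: for every decreasing
sequence of members there is a member `X` almost contained in each, meeting each
difference `Uₙ \ Uₙ₊₁` in at most one point. -/
theorem stmt_6 (U : Ultrafilter ℕ) :
    IsRamseyUF U ↔
      ∀ A : ℕ → Set ℕ, (∀ n, A n ∈ U) → (∀ n, A (n + 1) ⊆ A n) →
        ∃ X ∈ U, (∀ n, (X \ A n).Finite) ∧
          ∀ n, (X ∩ (A n \ A (n + 1))).Subsingleton := by
  classical
  constructor
  · -- Ramsey → selectivity
    intro hR A hA hdec
    have hanti : ∀ {n m : ℕ}, n ≤ m → A m ⊆ A n :=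
      fun {n m} h => antitone_nat_of_succ_le (fun k => hdec k) h
    rcases U.le_cofinite_or_eq_pure with hfree | ⟨a, rfl⟩
    · -- free case
      -- first coloring: almost containment
      obtain ⟨H₁, hH₁U, k₁, hH₁⟩ := hR (fun x y => if y ∈ A x then 0 else 1)
      have hk₁ : k₁ = 0 := by
        by_contra hk
        have hk : k₁ = 1 := fin2_ne_zero hk
        obtain ⟨x0, hx0⟩ := Ultrafilter.nonempty_of_mem hH₁U
        have hsub : H₁ ∩ A x0 ⊆ Set.Iic x0 := by
          intro y ⟨hyH, hyA⟩
          by_contra hy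
          have hlt : x0 < y := by simpa [Set.mem_Iic] using hy
          have := hH₁ x0 hx0 y hyH hlt
          rw [if_pos hyA, hk] at this
          exact absurd this (by decide)
        exact finite_notMem U hfree ((Set.finite_Iic x0).subset hsub)
          (U.inter_mem hH₁U (hA x0))
      have hH₁' : ∀ x ∈ H₁, ∀ y ∈ H₁, x < y → y ∈ A x := by
        intro x hx y hy hxy
        have := hH₁ x hx y hy hxy
        rw [hk₁] at this
        by_contra hyA
        rw [if_neg hyA] at this
        exact absurd this (by decide)
      -- second coloring: at most one point per difference
      obtain ⟨H₂, hH₂U, k₂, hH₂⟩ := hR (fun x y =>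
        if ∃ n, (x ∈ A n \ A (n + 1)) ∧ (y ∈ A n \ A (n + 1)) then 1 else 0)
      have hk₂ : k₂ = 0 := by
        by_contra hk
        have hk : k₂ = 1 := fin2_ne_zero hk
        obtain ⟨x0, hx0⟩ := Ultrafilter.nonempty_of_mem hH₂U
        by_cases hx0A : ∃ n, x0 ∈ A n \ A (n + 1)
        · obtain ⟨n0, hn0⟩ := hx0A
          have hsub : H₂ ∩ A (n0 + 1) ⊆ Set.Iic x0 := by
            intro y ⟨hyH, hyA⟩
            by_contra hy
            have hlt : x0 < y := by simpa [Set.mem_Iic] using hy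
            have := hH₂ x0 hx0 y hyH hlt
            rw [hk] at this
            have hex : ∃ n, (x0 ∈ A n \ A (n + 1)) ∧ (y ∈ A n \ A (n + 1)) := by
              by_contra hex
              rw [if_neg hex] at this
              exact absurd this (by decide)
            obtain ⟨n, ⟨hx1, hx2⟩, hy1, hy2⟩ := hex
            -- n = n0 by uniqueness
            have hnn0 : n = n0 := by
              by_contra hne
              rcases Nat.lt_or_ge n n0 with h | h
              · exact hx2 (hanti (by omega) hn0.1)
              · exact hn0.2 (hanti (by omega) hx1)
            rw [hnn0] at hy2
            exact hy2 hyA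
          exact finite_notMem U hfree ((Set.finite_Iic x0).subset hsub)
            (U.inter_mem hH₂U (hA (n0 + 1)))
        · -- x0 in every A n or fails somewhere without difference: then no pair colored 1 with x0
          have hsub : H₂ ⊆ Set.Iic x0 := by
            intro y hyH
            by_contra hy
            have hlt : x0 < y := by simpa [Set.mem_Iic] using hy
            have := hH₂ x0 hx0 y hyH hlt
            rw [hk] at this
            by_cases hex : ∃ n, (x0 ∈ A n \ A (n + 1)) ∧ (y ∈ A n \ A (n + 1))
            · obtain ⟨n, hn, _⟩ := hex
              exact hx0A ⟨n, hn⟩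
            · rw [if_neg hex] at this
              exact absurd this (by decide)
          exact finite_notMem U hfree ((Set.finite_Iic x0).subset hsub) hH₂U
      refine ⟨H₁ ∩ H₂ ∩ A 0, U.inter_mem (U.inter_mem hH₁U hH₂U) (hA 0), ?_, ?_⟩
      · intro n
        obtain ⟨xn, hxnH, hxn⟩ := exists_ge_mem U hfree hH₁U n
        have hsub : (H₁ ∩ H₂ ∩ A 0) \ A n ⊆ Set.Iic xn := by
          intro y ⟨⟨⟨hy1, _⟩, _⟩, hyA⟩
          by_contra hy
          have hlt : xn < y := by simpa [Set.mem_Iic] using hy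
          exact hyA (hanti hxn (hH₁' xn hxnH y hy1 hlt))
        exact (Set.finite_Iic xn).subset hsub
      · intro n x hx y hy
        by_contra hne
        rcases Ne.lt_or_gt hne with hlt | hlt
        · have := hH₂ x hx.1.1.2 y hy.1.1.2 hlt
          rw [hk₂, if_pos ⟨n, hx.2, hy.2⟩] at this
          exact absurd this (by decide)
        · have := hH₂ y hy.1.1.2 x hx.1.1.2 hlt
          rw [hk₂, if_pos ⟨n, hy.2, hx.2⟩] at this
          exact absurd this (by decide)
    · -- principal case
      have ha : ∀ n, a ∈ A n := fun n => (Ultrafilter.mem_pure).mp (hA n)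
      refine ⟨{a}, Ultrafilter.mem_pure.mpr rfl, ?_, ?_⟩
      · intro n
        refine Set.Finite.subset (Set.finite_singleton a) Set.diff_subset
      · intro n
        exact Set.subsingleton_singleton.anti (fun x hx => hx.1)
  · -- selectivity → Ramsey
    intro hSel c
    rcases U.le_cofinite_or_eq_pure with hfree | ⟨a, rfl⟩
    · -- free case
      set k : ℕ → Fin 2 := fun m => if {y | c m y = 0} ∈ U then 0 else 1 with hk
      have hB : ∀ m, {y | c m y = k m} ∈ U := by
        intro m
        by_cases h : {y | c m y = 0} ∈ U
        · simp only [hk, if_pos h]; exact h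
        · have : {y | c m y = 1} = {y | c m y = 0}ᶜ := by
            ext y; simp only [Set.mem_setOf_eq, Set.mem_compl_iff]
            constructor
            · intro h1 h0; rw [h0] at h1; exact absurd h1 (by decide)
            · exact fin2_ne_zero
          simp only [hk, if_neg h]
          rw [this]
          exact Ultrafilter.compl_mem_iff_notMem.mpr h
      obtain ⟨i, hK⟩ : ∃ i : Fin 2, {m | k m = i} ∈ U := by
        rcases U.mem_or_compl_mem {m | k m = 0} with h | h
        · exact ⟨0, h⟩
        · refine ⟨1, ?_⟩
          have : {m | k m = 1} = {m | k m = 0}ᶜ := by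
            ext m; simp only [Set.mem_setOf_eq, Set.mem_compl_iff]
            constructor
            · intro h1 h0; rw [h0] at h1; exact absurd h1 (by decide)
            · exact fin2_ne_zero
          rwa [this]
      -- decreasing sequence Y
      set Y : ℕ → Set ℕ := fun n => ⋂ m ∈ Set.Iic n, {y | c m y = k m} with hY
      have hYU : ∀ n, Y n ∈ U := by
        intro n
        rw [hY]
        exact (Filter.biInter_mem (Set.finite_Iic n)).mpr (fun m _ => hB m)
      have hYdec : ∀ n, Y (n + 1) ⊆ Y n := by
        intro n y hy
        simp only [hY, Set.mem_iInter, Set.mem_Iic] at hy ⊢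
        exact fun m hm => hy m (by omega)
      have hYB : ∀ n, Y n ⊆ {y | c n y = k n} := by
        intro n y hy
        simp only [hY, Set.mem_iInter, Set.mem_Iic] at hy
        exact hy n le_rfl
      have hYanti : ∀ {n m : ℕ}, n ≤ m → Y m ⊆ Y n :=
        fun {n m} h => antitone_nat_of_succ_le (fun j => hYdec j) h
      obtain ⟨X, hXU, hXfin, -⟩ := hSel Y hYU hYdec
      -- the bound function g
      set g : ℕ → ℕ := fun n => (hXfin n).toFinset.sup id + 1 with hg
      have hgP : ∀ n x, x ∈ X → g n ≤ x → x ∈ Y n := by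
        intro n x hxX hgx
        by_contra hxY
        have hmem : x ∈ (hXfin n).toFinset := (hXfin n).mem_toFinset.mpr ⟨hxX, hxY⟩
        have hle := Finset.le_sup (f := id) hmem
        simp only [id_eq] at hle
        have hgn : g n = (hXfin n).toFinset.sup id + 1 := rfl
        omega
      have hgmono : ∀ {n m : ℕ}, n ≤ m → g n ≤ g m := by
        intro n m h
        have hsub : X \ Y n ⊆ X \ Y m := fun x ⟨h1, h2⟩ => ⟨h1, fun hm => h2 (hYanti h hm)⟩
        have := Finset.sup_mono (((hXfin n).toFinset_subset_toFinset (ht := hXfin m)).mpr hsub)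
          (f := id)
        simp only [hg]
        omega
      -- interval endpoints
      set N : ℕ → ℕ := fun j => Nat.rec 0 (fun _ nk => max (g nk) nk + 1) j with hN
      have hN0 : N 0 = 0 := rfl
      have hNsucc : ∀ j, N (j + 1) = max (g (N j)) (N j) + 1 := fun j => rfl
      have hNstrict : StrictMono N := by
        apply strictMono_nat_of_lt_succ
        intro j
        rw [hNsucc]
        omega
      have hNle : ∀ j, j ≤ N j := fun j => hNstrict.le_apply
      -- second decreasing sequence
      set C : ℕ → Set ℕ := fun j => {x | N j ≤ x} with hC
      have hCU : ∀ j, C j ∈ U := by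
        intro j
        apply hfree
        rw [Filter.mem_cofinite]
        have : (C j)ᶜ = Set.Iio (N j) := by ext x; simp [hC, Set.mem_Iio]
        rw [this]; exact Set.finite_Iio _
      have hCdec : ∀ j, C (j + 1) ⊆ C j := by
        intro j x hx
        simp only [hC, Set.mem_setOf_eq] at hx ⊢
        exact le_trans (hNstrict (by omega : j < j + 1)).le hx
      obtain ⟨Z, hZU, -, hZsub⟩ := hSel C hCU hCdec
      -- index function
      set ι : ℕ → ℕ := fun z => Nat.findGreatest (fun j => N j ≤ z) z with hι
      have hι1 : ∀ z, N (ι z) ≤ z := by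
        intro z
        exact Nat.findGreatest_spec (P := fun j => N j ≤ z) (m := 0) (Nat.zero_le z)
          (hN0.le.trans (Nat.zero_le z))
      have hι2 : ∀ z, z < N (ι z + 1) := by
        intro z
        by_contra h
        push_neg at h
        have hle : ι z + 1 ≤ z := le_trans (hNle _) h
        exact Nat.findGreatest_is_greatest (Nat.lt_succ_self _) hle h
      have hιmono : ∀ {x y : ℕ}, x ≤ y → ι x ≤ ι y := by
        intro x y hxy
        by_contra h
        push_neg at h
        have h1 : N (ι y + 1) ≤ N (ι x) := hNstrict.monotone (Nat.succ_le_of_lt h)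
        have h2 := hι1 x
        have h3 := hι2 y
        omega
      -- parity split
      obtain ⟨P, hPU, hP⟩ : ∃ P ∈ U, ∀ x ∈ P, ∀ y ∈ P, (Even (ι x) ↔ Even (ι y)) := by
        rcases U.mem_or_compl_mem {z | Even (ι z)} with h | h
        · exact ⟨_, h, fun x hx y hy => iff_of_true hx hy⟩
        · refine ⟨_, h, fun x hx y hy => iff_of_false hx hy⟩
      refine ⟨X ∩ Z ∩ P ∩ {m | k m = i}, U.inter_mem (U.inter_mem (U.inter_mem hXU hZU) hPU) hK,
        i, ?_⟩
      rintro x ⟨⟨⟨hxX, hxZ⟩, hxP⟩, hxK⟩ y ⟨⟨⟨hyX, hyZ⟩, hyP⟩, hyK⟩ hxy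
      -- ι x < ι y
      have hne : ι x ≠ ι y := by
        intro heq
        have hsx : x ∈ Z ∩ (C (ι x) \ C (ι x + 1)) := by
          refine ⟨hxZ, hι1 x, ?_⟩
          simp only [hC, Set.mem_setOf_eq]
          exact not_le.mpr (hι2 x)
        have hsy : y ∈ Z ∩ (C (ι x) \ C (ι x + 1)) := by
          refine ⟨hyZ, ?_, ?_⟩
          · exact heq ▸ hι1 y
          · simp only [hC, Set.mem_setOf_eq]
            exact not_le.mpr (heq ▸ hι2 y)
        exact absurd (hZsub (ι x) hsx hsy) (by omega)
      have hlt : ι x < ι y := lt_of_le_of_ne (hιmono hxy.le) hne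
      have hgap : ι x + 2 ≤ ι y := by
        by_contra h
        have heq : ι y = ι x + 1 := by omega
        have := hP x hxP y hyP
        rw [heq, Nat.even_add_one] at this
        tauto
      -- conclude y ∈ Y x
      have hgxy : g x ≤ y := by
        have h1 : g x ≤ g (N (ι x + 1)) := hgmono (le_of_lt (hι2 x))
        have h2 : g (N (ι x + 1)) < N (ι x + 1 + 1) := by
          have := hNsucc (ι x + 1)
          omega
        have h3 : N (ι x + 1 + 1) ≤ N (ι y) := hNstrict.monotone (show ι x + 1 + 1 ≤ ι y by omega)
        have h4 : N (ι y) ≤ y := hι1 y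
        exact le_of_lt (lt_of_lt_of_le (lt_of_le_of_lt h1 h2) (le_trans h3 h4))
      have hyY : y ∈ Y x := hgP x y hyX hgxy
      have : c x y = k x := hYB x hyY
      rw [this]
      exact hxK
    · -- principal case
      refine ⟨{a}, Ultrafilter.mem_pure.mpr rfl, 0, ?_⟩
      rintro x rfl y rfl hxy
      exact absurd hxy (lt_irrefl _)
end

section
/- (Erdős–Rado canonization) For every k ≥ 1 and every equivalence relation E on [ℕ]^k, there is an infinite M ⊆ ℕ and a set I ⊆ {0,...,k-1} such that for all k-element subsets a, b of M, a E b iff min-enumeration of a and b agree at all coordinates in I. -/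
/-!
Colour each `2k`-subset `c` of `ℕ` by the set of pairs of position maps `f g : Fin k → Fin (2k)`
for which the `k`-subsets of `c` at positions `f` and `g` are `E`-related. Ramsey's theorem gives
an infinite `M` on which this colour is constant; since any two increasing `k`-tuples from `M` fit
into a `2k`-subset of `M` at positions given by their ranks, whether they are related then
depends only on the relative order type of the pair.

Call the coordinate `i` irrelevant if moving the `i`-th entry of a tuple from `M` upwards inside
its gap never changes its class, and let `I` be the set of the other coordinates. Tuples that agree
on `I` are related: change the coordinates in which they differ one at a time, from the top down.
Conversely, let `x E y` with `x i < y i`, both from a subset `M'` of `M` sparse enough that `M`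
has two elements in every gap of `M'`. Moving `y i` up to the next element of `M` does not change
the order type of the pair, so `y` is related to the moved tuple, an instance of moving the `i`-th
entry; by type invariance every such move preserves the class. If `x a = y i` for some `a`, then
`a > i` and `x a < y a`, so `a` is irrelevant by downward induction, and `x a` is first moved out
of the way.
-/

open Finset Function

namespace ErdosRado

section Ramsey

variable {C : Type*}

def IsHomogeneous (col : Finset ℕ → C) (n : ℕ) (M : Set ℕ) : Prop :=
  ∃ γ, ∀ t : Finset ℕ, ↑t ⊆ M → #t = n → col t = γ

theorem exists_isHomogeneous_insert {n : ℕ}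
    (ih : ∀ (col : Finset ℕ → C) (S : Set ℕ), S.Infinite →
      ∃ M ⊆ S, M.Infinite ∧ IsHomogeneous col n M)
    (col : Finset ℕ → C) {T : Set ℕ} (hT : T.Infinite) :
    ∃ a ∈ T, ∃ T' ⊆ T, T'.Infinite ∧ (∀ b ∈ T', a < b) ∧
      IsHomogeneous (fun t => col (insert a t)) n T' := by
  obtain ⟨a, ha⟩ := hT.nonempty
  obtain ⟨T', hT'sub, hT', hhom⟩ :=
    ih (fun t => col (insert a t)) (T \ Set.Iic a) (hT.sdiff (Set.finite_Iic a))
  exact ⟨a, ha, T', hT'sub.trans Set.sdiff_subset, hT', fun b hb => not_le.1 (hT'sub hb).2,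
    hhom⟩

variable [Finite C]

theorem exists_isHomogeneous_succ {n : ℕ}
    (ih : ∀ (col : Finset ℕ → C) (S : Set ℕ), S.Infinite →
      ∃ M ⊆ S, M.Infinite ∧ IsHomogeneous col n M)
    (col : Finset ℕ → C) {S : Set ℕ} (hS : S.Infinite) :
    ∃ M ⊆ S, M.Infinite ∧ IsHomogeneous col (n + 1) M := by
  have pivot (T : {T : Set ℕ // T.Infinite}) := exists_isHomogeneous_insert ih col T.2
  choose a ha next hnext_sub hnext_inf hnext_gt γ hγ using pivot
  set seq : ℕ → {T : Set ℕ // T.Infinite} :=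
    fun m => (fun T => ⟨next T, hnext_inf T⟩)^[m] ⟨S, hS⟩
  have seq_succ (m : ℕ) : (seq (m + 1)).1 = next (seq m) := by
    simp only [seq, iterate_succ_apply']
  have hanti : Antitone fun m => (seq m).1 :=
    antitone_nat_of_succ_le fun m => (seq_succ m).trans_le (hnext_sub _)
  set A : ℕ → ℕ := fun m => a (seq m)
  have hA : StrictMono A :=
    strictMono_nat_of_lt_succ fun m => hnext_gt _ _ (seq_succ m ▸ ha (seq (m + 1)))
  obtain ⟨c, hc⟩ := Finite.exists_infinite_fiber fun m => γ (seq m)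
  refine ⟨A '' ((fun m => γ (seq m)) ⁻¹' {c}), ?_,
    (Set.infinite_coe_iff.1 hc).image hA.injective.injOn, c, fun t ht hcard => ?_⟩
  · rintro _ ⟨m, -, rfl⟩
    exact hanti (Nat.zero_le m) (ha _)
  have hne : t.Nonempty := card_pos.1 (by omega)
  obtain ⟨m, hm, hmin⟩ := ht (t.min'_mem hne)
  have hrest : ↑(t.erase (t.min' hne)) ⊆ next (seq m) := by
    intro v hv
    obtain ⟨hvne, hvt⟩ := mem_erase.1 hv
    obtain ⟨j, -, rfl⟩ := ht hvt
    have hmj : m < j :=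
      hA.lt_iff_lt.1 (hmin ▸ lt_of_le_of_ne (t.min'_le _ hvt) hvne.symm)
    exact seq_succ m ▸ hanti hmj (ha _)
  calc col t = col (insert (A m) (t.erase (t.min' hne))) := by
        rw [hmin, insert_erase (t.min'_mem hne)]
    _ = γ (seq m) := hγ _ _ hrest (by rw [card_erase_of_mem (t.min'_mem hne)]; omega)
    _ = c := hm

theorem exists_infinite_isHomogeneous (n : ℕ) (col : Finset ℕ → C) {S : Set ℕ}
    (hS : S.Infinite) : ∃ M ⊆ S, M.Infinite ∧ IsHomogeneous col n M := by
  induction n generalizing col S with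
  | zero => exact ⟨S, subset_rfl, hS, col ∅, fun t _ ht => by rw [card_eq_zero.1 ht]⟩
  | succ n ih => exact exists_isHomogeneous_succ ih col hS

end Ramsey

def IsSparseIn (M' M : Set ℕ) : Prop :=
  ∀ m ∈ M', ∃ c₁ ∈ M, ∃ c₂ ∈ M, m < c₁ ∧ c₁ < c₂ ∧ ∀ z ∈ M', m < z → c₂ < z

theorem _root_.Set.Infinite.exists_isSparseIn {M : Set ℕ} (hM : M.Infinite) :
    ∃ M' ⊆ M, M'.Infinite ∧ IsSparseIn M' M := by
  have hf := Nat.nth_strictMono hM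
  have hfM := Nat.nth_mem_of_infinite hM
  refine ⟨Set.range fun n => Nat.nth (· ∈ M) (3 * n), ?_,
    Set.infinite_range_of_injective (hf.injective.comp fun a b h => by simp at h; omega), ?_⟩
  · rintro _ ⟨n, rfl⟩
    exact hfM _
  · rintro _ ⟨n, rfl⟩
    refine ⟨_, hfM (3 * n + 1), _, hfM (3 * n + 2), hf (by omega), hf (by omega), ?_⟩
    rintro _ ⟨n', rfl⟩ h
    have := hf.lt_iff_lt.1 h
    exact hf (by omega)

section Rank

variable {α : Type*} [LinearOrder α]

def rank (s : Finset α) (v : α) : ℕ := #{w ∈ s | w < v}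

theorem rank_lt_card {s : Finset α} {v : α} (hv : v ∈ s) : rank s v < #s :=
  card_lt_card (filter_ssubset.2 ⟨v, hv, lt_irrefl v⟩)

theorem rank_orderEmbOfFin {s : Finset α} {n : ℕ} (h : #s = n) (j : Fin n) :
    rank s (s.orderEmbOfFin h j) = j := by
  set e := s.orderEmbOfFin h
  have hs : s = univ.image e := (s.image_orderEmbOfFin_univ h).symm
  rw [rank, hs, filter_image]
  simp only [e.lt_iff_lt]
  rw [card_image_of_injective _ e.injective, filter_gt_eq_Iio, Fin.card_Iio]

theorem orderEmbOfFin_eq_of_rank {s : Finset α} {n : ℕ} (h : #s = n) {v : α} (hv : v ∈ s)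
    {j : Fin n} (hj : (j : ℕ) = rank s v) : s.orderEmbOfFin h j = v := by
  obtain ⟨j', rfl⟩ : v ∈ Set.range (s.orderEmbOfFin h) := by simpa using hv
  rw [rank_orderEmbOfFin, ← Fin.ext_iff] at hj
  rw [hj]

theorem rank_union_of_le {s t : Finset α} {v : α} (ht : ∀ w ∈ t, v ≤ w) :
    rank (s ∪ t) v = rank s v := by
  rw [rank, filter_union, filter_false_of_mem fun w hw => not_lt.2 (ht w hw), union_empty, rank]

variable {ι : Type*} [Fintype ι] {x y x' y' : ι → α}

theorem rank_image_union_image (hx : Injective x) (hy : Injective y) (v : α) :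
    rank (univ.image x ∪ univ.image y) v =
      #{a | x a < v} + #{b | y b < v ∧ ∀ a, x a ≠ y b} := by
  rw [rank, ← card_image_of_injective _ hx, ← card_image_of_injective _ hy,
    ← card_union_of_disjoint]
  · congr 1
    ext w
    simp only [mem_filter, mem_union, mem_image, mem_univ, true_and]
    grind
  · simp only [disjoint_left, mem_image, mem_filter, mem_univ, true_and]
    grind

theorem rank_image_union_image_congr (hx : Injective x) (hy : Injective y) (hx' : Injective x')
    (hy' : Injective y') {v v' : α} (hxv : ∀ a, x a < v ↔ x' a < v')
    (hyv : ∀ b, y b < v ↔ y' b < v') (hxy : ∀ a b, x a = y b ↔ x' a = y' b) :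
    rank (univ.image x ∪ univ.image y) v = rank (univ.image x' ∪ univ.image y') v' := by
  simp only [rank_image_union_image hx hy, rank_image_union_image hx' hy', hxv, hyv, ne_eq, hxy]

end Rank

theorem _root_.Set.Infinite.exists_superset_rank_eq {M : Set ℕ} (hM : M.Infinite)
    {s : Finset ℕ} (hs : ↑s ⊆ M) {n : ℕ} (hn : #s ≤ n) :
    ∃ c : Finset ℕ, ↑c ⊆ M ∧ #c = n ∧ ∀ v ∈ s, v ∈ c ∧ rank c v = rank s v := by
  obtain ⟨t, htM, ht⟩ := (hM.sdiff (Set.finite_Iic (s.sup id))).exists_subset_card_eq (n - #s)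
  have hst : ∀ v ∈ s, ∀ w ∈ t, v < w := fun v hv w hw =>
    (le_sup (f := id) hv).trans_lt (not_le.1 (htM hw).2)
  refine ⟨s ∪ t, ?_, ?_, fun v hv =>
    ⟨mem_union_left t hv, rank_union_of_le fun w hw => (hst v hv w hw).le⟩⟩
  · rw [coe_union]
    exact Set.union_subset hs (htM.trans Set.sdiff_subset)
  · rw [card_union_of_disjoint (disjoint_left.2 fun v hv hvt => (hst v hv v hvt).false), ht]
    omega

variable {k : ℕ}

def IncIn (M : Set ℕ) (x : Fin k → ℕ) : Prop := StrictMono x ∧ ∀ i, x i ∈ M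

theorem IncIn.mono {M N : Set ℕ} (h : M ⊆ N) {x : Fin k → ℕ} (hx : IncIn M x) : IncIn N x :=
  ⟨hx.1, fun i => h (hx.2 i)⟩

theorem IncIn.update_of_lt {M : Set ℕ} {x : Fin k → ℕ} (hx : IncIn M x) {i : Fin k} {c : ℕ}
    (hc : c ∈ M) (hic : x i < c) (hci : ∀ j, i < j → c < x j) :
    IncIn M (Function.update x i c) := by
  refine ⟨fun a b hab => ?_, fun j => ?_⟩
  · simp only [update_apply]
    split_ifs with ha hb hb
    · exact absurd (ha.trans hb.symm ▸ hab) (lt_irrefl b)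
    · exact hci b (ha ▸ hab)
    · exact (hx.1 (hb ▸ hab)).trans hic
    · exact hx.1 hab
  · rcases eq_or_ne j i with rfl | hj
    · simpa using hc
    · simpa [hj] using hx.2 j

theorem IncIn.orderEmbOfFin {M : Set ℕ} {s : Finset ℕ} (hs : ↑s ⊆ M) (h : #s = k) :
    IncIn M (s.orderEmbOfFin h) :=
  ⟨(s.orderEmbOfFin h).strictMono, fun i => hs (s.orderEmbOfFin_mem h i)⟩

section TupleRel

variable (E : {s : Finset ℕ // s.card = k} → {s : Finset ℕ // s.card = k} → Prop)

-- Vacuously true when `x` or `y` is not injective.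
def TupleRel (x y : Fin k → ℕ) : Prop :=
  ∀ a b : {s : Finset ℕ // s.card = k}, a.1 = univ.image x → b.1 = univ.image y → E a b

theorem tupleRel_orderEmbOfFin_iff (a b : {s : Finset ℕ // s.card = k}) :
    TupleRel E (a.1.orderEmbOfFin a.2) (b.1.orderEmbOfFin b.2) ↔ E a b := by
  refine ⟨fun h => h a b (by simp) (by simp), fun h a' b' ha hb => ?_⟩
  rw [image_orderEmbOfFin_univ, ← Subtype.ext_iff] at ha hb
  rwa [ha, hb]

variable {E} (hE : Equivalence E)
include hE

theorem TupleRel.refl (x : Fin k → ℕ) : TupleRel E x x := fun a b ha hb => by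
  rw [Subtype.ext (hb.trans ha.symm)]
  exact hE.refl a

theorem TupleRel.symm {x y : Fin k → ℕ} (h : TupleRel E x y) : TupleRel E y x :=
  fun a b ha hb => hE.symm (h b a hb ha)

theorem TupleRel.trans {x y z : Fin k → ℕ} (hy : Injective y) (h₁ : TupleRel E x y)
    (h₂ : TupleRel E y z) : TupleRel E x z := fun a b ha hb =>
  hE.trans (h₁ a ⟨_, card_image_of_injective univ hy |>.trans (card_fin k)⟩ ha rfl)
    (h₂ _ b rfl hb)

end TupleRel

theorem card_image_union_image_le {α : Type*} [DecidableEq α] (x y : Fin k → α) :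
    #(univ.image x ∪ univ.image y) ≤ 2 * k :=
  (card_union_le _ _).trans (by grw [card_image_le, card_image_le]; simp; omega)

def SameType (x y x' y' : Fin k → ℕ) : Prop :=
  ∀ a b, (x a < y b ↔ x' a < y' b) ∧ (x a = y b ↔ x' a = y' b)

theorem SameType.swap {x y x' y' : Fin k → ℕ} (h : SameType x y x' y') : SameType y x y' x' :=
  fun a b =>
    ⟨by rw [← not_le, le_iff_lt_or_eq, (h b a).1, (h b a).2, ← le_iff_lt_or_eq, not_le],
      by rw [eq_comm, (h b a).2, eq_comm]⟩

theorem SameType.rank_eq {x y x' y' : Fin k → ℕ} (h : SameType x y x' y') (hx : StrictMono x)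
    (hy : StrictMono y) (hx' : StrictMono x') (hy' : StrictMono y') (i : Fin k) :
    rank (univ.image x ∪ univ.image y) (x i) = rank (univ.image x' ∪ univ.image y') (x' i) :=
  rank_image_union_image_congr hx.injective hy.injective hx'.injective hy'.injective
    (fun a => by rw [hx.lt_iff_lt, hx'.lt_iff_lt]) (fun b => (h.swap b i).1)
    (fun a b => (h a b).2)

variable (E : {s : Finset ℕ // s.card = k} → {s : Finset ℕ // s.card = k} → Prop)

-- Quantifying over `h` makes the colour total; only its values on `2k`-sets matter.
def patternColor (c : Finset ℕ) (f g : Fin k → Fin (2 * k)) : Prop :=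
  ∀ h : #c = 2 * k, TupleRel E (c.orderEmbOfFin h ∘ f) (c.orderEmbOfFin h ∘ g)

def TypeInvariant (M : Set ℕ) : Prop :=
  ∀ ⦃x y x' y' : Fin k → ℕ⦄, IncIn M x → IncIn M y → IncIn M x' → IncIn M y' →
    SameType x y x' y' → TupleRel E x y → TupleRel E x' y'

variable {E}

theorem tupleRel_iff_of_rank {M : Set ℕ} (hM : M.Infinite)
    {γ : (Fin k → Fin (2 * k)) → (Fin k → Fin (2 * k)) → Prop}
    (hγ : ∀ c : Finset ℕ, ↑c ⊆ M → #c = 2 * k → patternColor E c = γ)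
    {x y : Fin k → ℕ} (hx : IncIn M x) (hy : IncIn M y) {f g : Fin k → Fin (2 * k)}
    (hf : ∀ a, (f a : ℕ) = rank (univ.image x ∪ univ.image y) (x a))
    (hg : ∀ a, (g a : ℕ) = rank (univ.image x ∪ univ.image y) (y a)) :
    TupleRel E x y ↔ γ f g := by
  set s := univ.image x ∪ univ.image y
  have hsM : ↑s ⊆ M := by
    simp [s, Set.range_subset_iff, hx.2, hy.2]
  obtain ⟨c, hcM, hc, hsc⟩ := hM.exists_superset_rank_eq hsM (card_image_union_image_le x y)
  have hemb {z : Fin k → ℕ} (hz : ∀ a, z a ∈ s) {p : Fin k → Fin (2 * k)}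
      (hp : ∀ a, (p a : ℕ) = rank s (z a)) : c.orderEmbOfFin hc ∘ p = z :=
    funext fun a =>
      orderEmbOfFin_eq_of_rank hc (hsc _ (hz a)).1 ((hp a).trans (hsc _ (hz a)).2.symm)
  rw [← hγ c hcM hc, patternColor, forall_prop_of_true hc,
    hemb (fun a => by simp [s]) hf, hemb (fun a => by simp [s]) hg]

variable (E) in
theorem exists_typeInvariant :
    ∃ M : Set ℕ, M.Infinite ∧ TypeInvariant E M := by
  obtain ⟨M, -, hM, γ, hγ⟩ :=
    exists_infinite_isHomogeneous (2 * k) (patternColor E) Set.infinite_univ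
  refine ⟨M, hM, fun x y x' y' hx hy hx' hy' hxy hR => ?_⟩
  have hlt {v} (hv : v ∈ univ.image x ∪ univ.image y) :
      rank (univ.image x ∪ univ.image y) v < 2 * k :=
    (rank_lt_card hv).trans_le (card_image_union_image_le x y)
  have hrank_y a : rank (univ.image x ∪ univ.image y) (y a)
      = rank (univ.image x' ∪ univ.image y') (y' a) := by
    rw [union_comm, union_comm (univ.image x')]
    exact hxy.swap.rank_eq hy.1 hx.1 hy'.1 hx'.1 a
  rw [tupleRel_iff_of_rank hM hγ hx' hy' (f := fun a => ⟨rank _ (x a), hlt (by simp)⟩)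
    (g := fun a => ⟨rank _ (y a), hlt (by simp)⟩) (hxy.rank_eq hx.1 hy.1 hx'.1 hy'.1) hrank_y]
  exact (tupleRel_iff_of_rank hM hγ hx hy (fun _ => rfl) (fun _ => rfl)).1 hR

theorem sameType_update {x x' : Fin k → ℕ} (hx : StrictMono x) (hx' : StrictMono x')
    {i : Fin k} {c c' : ℕ} (hic : x i < c) (hci : ∀ j, i < j → c < x j) (hic' : x' i < c')
    (hci' : ∀ j, i < j → c' < x' j) : SameType x (update x i c) x' (update x' i c') := by
  have key {x : Fin k → ℕ} (hx : StrictMono x) {c : ℕ} (hic : x i < c)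
      (hci : ∀ j, i < j → c < x j) (a b : Fin k) :
      (x a < update x i c b ↔ a < b ∨ a = i ∧ b = i) ∧
        (x a = update x i c b ↔ a = b ∧ b ≠ i) := by
    rcases eq_or_ne b i with rfl | hb
    · have hlt : x a < c ↔ a ≤ b :=
        ⟨fun h => not_lt.1 fun hba => (hci a hba).asymm h, fun h => (hx.monotone h).trans_lt hic⟩
      have hne : x a ≠ c := fun h => by
        rcases le_or_gt a b with hab | hab
        · exact (hx.monotone hab).not_gt (h ▸ hic)
        · exact (hci a hab).ne' h
      simp [hlt, hne, le_iff_lt_or_eq]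
    · simp [hb, hx.lt_iff_lt, hx.injective.eq_iff]
  intro a b
  rw [(key hx hic hci a b).1, (key hx' hic' hci' a b).1, (key hx hic hci a b).2,
    (key hx' hic' hci' a b).2]
  exact ⟨Iff.rfl, Iff.rfl⟩

variable (E) in
def CoordIrrelevant (M : Set ℕ) (i : Fin k) : Prop :=
  ∀ ⦃x : Fin k → ℕ⦄ ⦃c : ℕ⦄, IncIn M x → c ∈ M → x i < c → (∀ j, i < j → c < x j) →
    TupleRel E x (update x i c)

variable {M : Set ℕ}

theorem CoordIrrelevant.of_tupleRel (hinv : TypeInvariant E M) {x : Fin k → ℕ} {i : Fin k}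
    {c : ℕ} (hx : IncIn M x) (hc : c ∈ M) (hic : x i < c) (hci : ∀ j, i < j → c < x j)
    (hR : TupleRel E x (update x i c)) : CoordIrrelevant E M i :=
  fun _ _ hx' hc' hic' hci' => hinv hx (hx.update_of_lt hc hic hci) hx'
    (hx'.update_of_lt hc' hic' hci') (sameType_update hx.1 hx'.1 hic hci hic' hci') hR

theorem tupleRel_of_eqOn_of_forall_le (hE : Equivalence E) {I : Set (Fin k)}
    (hI : ∀ i ∉ I, CoordIrrelevant E M i) (m : ℕ) {x y : Fin k → ℕ} (hx : IncIn M x)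
    (hy : IncIn M y) (hxy : ∀ i ∈ I, x i = y i) (htop : ∀ l : Fin k, m ≤ l → x l = y l) :
    TupleRel E x y := by
  induction m generalizing x y with
  | zero =>
    rw [funext fun l => htop l (Nat.zero_le _)]
    exact .refl hE y
  | succ m ih =>
    by_cases hm : m < k
    swap
    · exact ih hx hy hxy fun l hl => htop l (by omega)
    set j : Fin k := ⟨m, hm⟩
    have htop' : ∀ l, j < l → x l = y l := fun l hl => htop l hl
    wlog hle : x j ≤ y j generalizing x y with H
    · exact (H hy hx (fun i hi => (hxy i hi).symm) (fun l hl => (htop l hl).symm)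
        (fun l hl => (htop' l hl).symm) (le_of_not_ge hle)).symm hE
    rcases hle.lt_or_eq with hlt | heq
    · have hj : j ∉ I := fun hj => hlt.ne (hxy j hj)
      have hyx : ∀ l, j < l → y j < x l := fun l hl => htop' l hl ▸ hy.1 hl
      have hx' := hx.update_of_lt (hy.2 j) hlt hyx
      refine (hI j hj hx (hy.2 j) hlt hyx).trans hE hx'.1.injective
        (ih hx' hy (fun i hi => ?_) fun l hl => ?_)
      · rw [update_of_ne (ne_of_mem_of_not_mem hi hj)]
        exact hxy i hi
      · rcases eq_or_ne l j with rfl | hlj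
        · rw [update_self]
        · rw [update_of_ne hlj]
          exact htop l (by have : (l : ℕ) ≠ m := fun h => hlj (Fin.ext h); omega)
    · exact ih hx hy hxy fun l hl => by
        rcases eq_or_lt_of_le hl with h | h
        · rwa [show l = j from Fin.ext h.symm]
        · exact htop l h

theorem tupleRel_of_eqOn (hE : Equivalence E) {I : Set (Fin k)}
    (hI : ∀ i ∉ I, CoordIrrelevant E M i) {x y : Fin k → ℕ} (hx : IncIn M x) (hy : IncIn M y)
    (hxy : ∀ i ∈ I, x i = y i) : TupleRel E x y :=
  tupleRel_of_eqOn_of_forall_le hE hI k hx hy hxy fun l hl => absurd l.2 (not_lt.2 hl)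

theorem CoordIrrelevant.of_tupleRel_gap (hE : Equivalence E) (hinv : TypeInvariant E M)
    {p v : Fin k → ℕ} {i : Fin k} {c : ℕ} (hp : IncIn M p) (hv : IncIn M v) (hc : c ∈ M)
    (hR : TupleRel E p v) (hvc : v i < c) (hcv : ∀ j, i < j → c < v j)
    (hpc : ∀ b, p b < v i ∨ c < p b) : CoordIrrelevant E M i := by
  have hv' := hv.update_of_lt hc hvc hcv
  have htype : SameType p v p (update v i c) := by
    intro a b
    rcases eq_or_ne b i with rfl | hb
    · rw [update_self]
      rcases hpc a with h | h <;> constructor <;> constructor <;> intro <;> omega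
    · rw [update_of_ne hb]
      exact ⟨Iff.rfl, Iff.rfl⟩
  exact .of_tupleRel hinv hv hc hvc hcv
    ((hR.symm hE).trans hE hp.1.injective (hinv hp hv hp hv' htype hR))

theorem coordIrrelevant_of_tupleRel_of_lt (hE : Equivalence E) (hinv : TypeInvariant E M)
    {M' : Set ℕ} (hM' : M' ⊆ M) (hsparse : IsSparseIn M' M) (i : Fin k) {x y : Fin k → ℕ}
    (hx : IncIn M' x) (hy : IncIn M' y) (hR : TupleRel E x y)
    (hlt : x i < y i) : CoordIrrelevant E M i := by
  induction i using WellFoundedGT.induction generalizing x y with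
  | _ i ih =>
  obtain ⟨c₁, hc₁, c₂, hc₂, h₁, h₁₂, hgap⟩ := hsparse (y i) (hy.2 i)
  have hcy : ∀ j, i < j → c₁ < y j := fun j hj => h₁₂.trans (hgap _ (hy.2 j) (hy.1 hj))
  have hxc : ∀ b, x b ≠ y i → x b < y i ∨ c₁ < x b := fun b hb =>
    (lt_or_gt_of_ne hb).imp_right fun h => h₁₂.trans (hgap _ (hx.2 b) h)
  by_cases hcase : ∃ a, x a = y i
  · obtain ⟨a, ha⟩ := hcase
    have hia : i < a := hx.1.lt_iff_lt.1 (ha ▸ hlt)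
    have hirr := ih a hia hx hy hR (ha ▸ hy.1 hia)
    have hxa : x a < c₂ := ha ▸ h₁.trans h₁₂
    have hcx : ∀ j, a < j → c₂ < x j := fun j hj => hgap _ (hx.2 j) (ha ▸ hx.1 hj)
    have hx' := (hx.mono hM').update_of_lt hc₂ hxa hcx
    refine .of_tupleRel_gap hE hinv hx' (hy.mono hM') hc₁
      (((hirr (hx.mono hM') hc₂ hxa hcx).symm hE).trans hE hx.1.injective hR) h₁ hcy fun b => ?_
    rcases eq_or_ne b a with rfl | hb
    · rw [update_self]
      exact .inr h₁₂
    · rw [update_of_ne hb]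
      exact hxc b (ha ▸ hx.1.injective.ne hb)
  · exact .of_tupleRel_gap hE hinv (hx.mono hM') (hy.mono hM') hc₁ hR h₁ hcy fun b =>
      hxc b fun h => hcase ⟨b, h⟩

end ErdosRado

open ErdosRado

theorem stmt_10_general (k : ℕ)
    (E : {s : Finset ℕ // s.card = k} → {s : Finset ℕ // s.card = k} → Prop)
    (hE : Equivalence E) :
    ∃ M : Set ℕ, M.Infinite ∧ ∃ I : Set (Fin k),
      ∀ a b : {s : Finset ℕ // s.card = k}, ↑a.1 ⊆ M → ↑b.1 ⊆ M →
        (E a b ↔ ∀ i ∈ I,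
          (a.1.orderIsoOfFin a.2 i : ℕ) = (b.1.orderIsoOfFin b.2 i : ℕ)) := by
  obtain ⟨M, hM, hinv⟩ := exists_typeInvariant E
  obtain ⟨M', hM'M, hM', hsparse⟩ := hM.exists_isSparseIn
  refine ⟨M', hM', {i | ¬ CoordIrrelevant E M i}, fun a b ha hb => ?_⟩
  have hx := IncIn.orderEmbOfFin ha a.2
  have hy := IncIn.orderEmbOfFin hb b.2
  simp only [Finset.coe_orderIsoOfFin_apply, ← tupleRel_orderEmbOfFin_iff]
  refine ⟨fun hR i hi => by_contra fun hne => hi ?_,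
    tupleRel_of_eqOn hE (fun i hi => not_not.1 hi) (hx.mono hM'M) (hy.mono hM'M)⟩
  rcases lt_or_gt_of_ne hne with h | h
  · exact coordIrrelevant_of_tupleRel_of_lt hE hinv hM'M hsparse i hx hy hR h
  · exact coordIrrelevant_of_tupleRel_of_lt hE hinv hM'M hsparse i hy hx (hR.symm hE) h

/-- Erdős–Rado canonization theorem: every equivalence relation on the `k`-element
subsets of `ℕ` is canonical (given by `E_I` for some `I ⊆ {0,…,k-1}`) on the
`k`-subsets of some infinite `M ⊆ ℕ`. -/
theorem stmt_10 (k : ℕ) (hk : 1 ≤ k)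
    (E : {s : Finset ℕ // s.card = k} → {s : Finset ℕ // s.card = k} → Prop)
    (hE : Equivalence E) :
    ∃ M : Set ℕ, M.Infinite ∧ ∃ I : Set (Fin k),
      ∀ a b : {s : Finset ℕ // s.card = k}, ↑a.1 ⊆ M → ↑b.1 ⊆ M →
        (E a b ↔ ∀ i ∈ I,
          (a.1.orderIsoOfFin a.2 i : ℕ) = (b.1.orderIsoOfFin b.2 i : ℕ)) :=
  stmt_10_general k E hE
end
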